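/- arXiv:1607.00601 — 4 statements merged into one kernel-verified Lean document; each statement's English description precedes it below -/
import Mathlib

section
/- Given a graph covering by covers φᵢ : Gᵢ → Gᵢ₋₁, the edge relation E_𝒢 = { (x,y) ∈ V_𝒢 × V_𝒢 : (xᵢ,yᵢ) ∈ Eᵢ for all i } on the inverse limit V_𝒢 defines a function, i.e., for every x ∈ V_𝒢 there is a unique y ∈ V_𝒢 with (x,y) ∈ E_𝒢. -/
/-- The edge relation is surjective: every vertex has an incoming and outgoing edge. -/
def IsSurjRel {V : Type*} (E : Set (V × V)) : Prop :=
  ∀ v : V, (∃ u, (u, v) ∈ E) ∧ (∃ u, (v, u) ∈ E)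

/-- A cover: a positively directional edge-surjective graph homomorphism. -/
def IsCover {V₁ V₂ : Type*} (E₁ : Set (V₁ × V₁)) (E₂ : Set (V₂ × V₂))
    (φ : V₁ → V₂) : Prop :=
  (∀ u v : V₁, (u, v) ∈ E₁ → (φ u, φ v) ∈ E₂) ∧
  ((fun e : V₁ × V₁ => (φ e.1, φ e.2)) '' E₁ = E₂) ∧
  (∀ u v v' : V₁, (u, v) ∈ E₁ → (u, v') ∈ E₁ → φ v = φ v')

/-- A graph covering: a sequence of covers `φ i : G (i+1) → G i` between finite
directed surjective graphs, with `G 0` a singleton graph. -/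
structure GraphCovering (V : ℕ → Type*) where
  E : ∀ i, Set (V i × V i)
  φ : ∀ i, V (i + 1) → V i
  surj : ∀ i, IsSurjRel (E i)
  cover : ∀ i, IsCover (E (i + 1)) (E i) (φ i)
  single : Subsingleton (V 0)
  nonempty₀ : Nonempty (V 0)

/-- The inverse limit vertex set of a graph covering. -/
def GraphCovering.limitSet {V : ℕ → Type*} (G : GraphCovering V) :
    Set (∀ i, V i) :=
  { x | ∀ i, x i = G.φ i (x (i + 1)) }

/-!
Choose an out-neighbour `wᵢ₊₁` of `xᵢ₊₁` in `Gᵢ₊₁` and set `yᵢ := φᵢ₊₁(wᵢ₊₁)`. Since covers are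
positively directional, `φᵢ₊₁` takes the same value on *all* out-neighbours of `xᵢ₊₁`, so `yᵢ`
does not depend on the choice. This makes `y` compatible with the bonding maps (push `wᵢ₊₂`
down to an out-neighbour of `xᵢ₊₁`), and forces any `y'` in the limit with `(xᵢ₊₁, y'ᵢ₊₁)` an
edge to satisfy `y'ᵢ = φᵢ₊₁(y'ᵢ₊₁) = yᵢ`.
-/

namespace GraphCovering

variable {V : ℕ → Type*} (G : GraphCovering V)

noncomputable def successor (x : ∀ i, V i) : ∀ i, V i :=
  fun i => G.φ i (G.surj (i + 1) (x (i + 1))).2.choose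

theorem successor_spec (x : ∀ i, V i) (i : ℕ) :
    ∃ w, (x (i + 1), w) ∈ G.E (i + 1) ∧ G.φ i w = G.successor x i :=
  ⟨_, (G.surj (i + 1) (x (i + 1))).2.choose_spec, rfl⟩

theorem φ_eq_successor {x : ∀ i, V i} {i : ℕ} {v : V (i + 1)}
    (hv : (x (i + 1), v) ∈ G.E (i + 1)) : G.φ i v = G.successor x i := by
  obtain ⟨w, hw, hφw⟩ := G.successor_spec x i
  exact hφw ▸ (G.cover i).2.2 _ _ _ hv hw

theorem mem_E_successor {x : ∀ i, V i} (hx : x ∈ G.limitSet) (i : ℕ) :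
    (x i, G.successor x i) ∈ G.E i := by
  obtain ⟨w, hw, hφw⟩ := G.successor_spec x i
  simpa only [← hx i, hφw] using (G.cover i).1 _ _ hw

theorem successor_mem_limitSet {x : ∀ i, V i} (hx : x ∈ G.limitSet) :
    G.successor x ∈ G.limitSet := fun i =>
  (G.φ_eq_successor (G.mem_E_successor hx (i + 1))).symm

theorem eq_successor_of_mem_E {x y : ∀ i, V i} (hy : y ∈ G.limitSet)
    (hxy : ∀ i, (x i, y i) ∈ G.E i) : y = G.successor x :=
  funext fun i => (hy i).trans (G.φ_eq_successor (hxy (i + 1)))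

end GraphCovering

theorem limit_edge_relation_functional_general {V : ℕ → Type*}
    (G : GraphCovering V) (x : ∀ i, V i) (hx : x ∈ G.limitSet) :
    ∃! y : ∀ i, V i, y ∈ G.limitSet ∧ ∀ i, (x i, y i) ∈ G.E i :=
  ⟨G.successor x, ⟨G.successor_mem_limitSet hx, G.mem_E_successor hx⟩,
    fun _ ⟨hy, hxy⟩ => G.eq_successor_of_mem_E hy hxy⟩

/-- The edge relation on the inverse limit defines a function: every `x ∈ V_𝒢`
has a unique `y ∈ V_𝒢` with `(x, y) ∈ E_𝒢`. -/
theorem limit_edge_relation_functional {V : ℕ → Type*} [∀ i, Fintype (V i)]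
    (G : GraphCovering V) (x : ∀ i, V i) (hx : x ∈ G.limitSet) :
    ∃! y : ∀ i, V i, y ∈ G.limitSet ∧ ∀ i, (x i, y i) ∈ G.E i :=
  limit_edge_relation_functional_general G x hx
end

section
/- Given a graph covering by covers φᵢ, the induced map f : V_𝒢 → V_𝒢 defined by f(x) = y iff (x,y) ∈ E_𝒢 is continuous and surjective; hence (V_𝒢, f) is a zero-dimensional dynamical system. -/
/-!
Since every cover is positively directional, all edges leaving a vertex of `G (i + 1)` end in
vertices with the same image in `G i`; hence coordinate `i` of `f x` is determined by `x (i + 1)`,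
and `f` is continuous. For surjectivity, the predecessors of the coordinates `y i` of a point `y`
form an inverse system of finite nonempty sets under the maps `φ i` (covers are graph
homomorphisms), and a compatible thread through it, given by König's lemma, is a preimage of `y`.
-/

open CategoryTheory in
theorem exists_seq_compatible_of_finite {A : ℕ → Type*} [∀ i, Finite (A i)]
    [∀ i, Nonempty (A i)] (p : ∀ i, A (i + 1) → A i) :
    ∃ s : ∀ i, A i, ∀ i, p i (s (i + 1)) = s i := by
  let F : ℕᵒᵖ ⥤ Type _ := Functor.ofOpSequence fun i => TypeCat.ofHom (p i)
  have : ∀ j : ℕᵒᵖ, Finite (F.obj j) := fun j => inferInstanceAs (Finite (A j.unop))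
  have : ∀ j : ℕᵒᵖ, Nonempty (F.obj j) := fun j => inferInstanceAs (Nonempty (A j.unop))
  obtain ⟨s, hs⟩ := nonempty_sections_of_finite_inverse_system F
  refine ⟨fun i => s ⟨i⟩, fun i => ?_⟩
  have := hs (homOfLE (Nat.le_add_right i 1)).op
  rwa [Functor.ofOpSequence_map_homOfLE_succ] at this

namespace GraphCovering

variable {V : ℕ → Type*} (G : GraphCovering V)

theorem exists_mem_limitSet_forall_mem_E [∀ i, Finite (V i)] {y : ∀ i, V i}
    (hy : y ∈ G.limitSet) : ∃ x ∈ G.limitSet, ∀ i, (x i, y i) ∈ G.E i := by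
  have (i : ℕ) : Nonempty {u : V i // (u, y i) ∈ G.E i} :=
    let ⟨u, hu⟩ := (G.surj i (y i)).1
    ⟨⟨u, hu⟩⟩
  obtain ⟨s, hs⟩ := exists_seq_compatible_of_finite
    (A := fun i => {u : V i // (u, y i) ∈ G.E i}) fun i u =>
      ⟨G.φ i u.1, hy i ▸ (G.cover i).1 _ _ u.2⟩
  exact ⟨fun i => (s i).1, fun i => congrArg Subtype.val (hs i).symm, fun i => (s i).2⟩

theorem apply_eq_of_mem_E_succ {y y' : ∀ i, V i} (hy : y ∈ G.limitSet)
    (hy' : y' ∈ G.limitSet) {i : ℕ} {u : V (i + 1)} (h : (u, y (i + 1)) ∈ G.E (i + 1))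
    (h' : (u, y' (i + 1)) ∈ G.E (i + 1)) : y i = y' i := by
  rw [hy i, hy' i]
  exact (G.cover i).2.2 u _ _ h h'

theorem isClosed_limitSet [∀ i, TopologicalSpace (V i)] [∀ i, DiscreteTopology (V i)] :
    IsClosed G.limitSet := by
  simp only [limitSet, Set.ofPred_forall]
  exact isClosed_iInter fun i =>
    isClosed_eq (continuous_apply i) (continuous_of_discreteTopology.comp (continuous_apply _))

end GraphCovering

/-- The induced map `f` on the inverse limit (defined by `f x = y` iff
`(x, y) ∈ E_𝒢`) is continuous and surjective, and the phase space is a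
compact zero-dimensional space. -/
theorem limit_map_continuous_surjective {V : ℕ → Type*} [∀ i, Fintype (V i)]
    [∀ i, TopologicalSpace (V i)] [∀ i, DiscreteTopology (V i)]
    (G : GraphCovering V)
    (f : G.limitSet → G.limitSet)
    (hf : ∀ x y : G.limitSet, f x = y ↔ ∀ i, ((x : ∀ i, V i) i, (y : ∀ i, V i) i) ∈ G.E i) :
    Continuous f ∧ Function.Surjective f ∧
      CompactSpace G.limitSet ∧ TotallyDisconnectedSpace G.limitSet := by
  have hedge : ∀ (x : G.limitSet) i, ((x : ∀ i, V i) i, (f x : ∀ i, V i) i) ∈ G.E i :=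
    fun x => (hf x (f x)).1 rfl
  refine ⟨?_, fun y => ?_, isCompact_iff_compactSpace.mp G.isClosed_limitSet.isCompact,
    inferInstance⟩
  · refine continuous_induced_rng.2 <| continuous_pi fun i => ?_
    refine IsLocallyConstant.continuous <| (IsLocallyConstant.iff_eventually_eq _).2 fun x => ?_
    have hnhds : ∀ᶠ z : G.limitSet in nhds x, (z : ∀ i, V i) (i + 1) = (x : ∀ i, V i) (i + 1) :=
      ((continuous_apply (i + 1)).comp continuous_subtype_val).continuousAt.eventually_mem
        (isOpen_discrete {_} |>.mem_nhds rfl)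
    filter_upwards [hnhds] with z hz
    exact G.apply_eq_of_mem_E_succ (f z).2 (f x).2 (hedge z (i + 1)) (hz ▸ hedge x (i + 1))
  · obtain ⟨x, hx, hxy⟩ := G.exists_mem_limitSet_forall_mem_E y.2
    exact ⟨⟨x, hx⟩, (hf _ y).2 hxy⟩
end

section
/- If in a graph covering all the covers φᵢ are bidirectional, then the induced map f : V_𝒢 → V_𝒢 on the inverse limit is a homeomorphism. -/
/-- Bidirectionality of a graph homomorphism. -/
def IsBidirectional {V₁ V₂ : Type*} (E₁ : Set (V₁ × V₁)) (φ : V₁ → V₂) : Prop :=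
  (∀ u v v' : V₁, (u, v) ∈ E₁ → (u, v') ∈ E₁ → φ v = φ v') ∧
  (∀ u u' v : V₁, (u, v) ∈ E₁ → (u', v) ∈ E₁ → φ u = φ u')

/-!
The level-`i` coordinate of `f x` is determined by `x (i + 1)`, since covers have deterministic
out-edges. Bidirectionality makes in-edges deterministic too: if `(u, y (i + 1))` is an edge, then
`φ i u` is the only possible level-`i` coordinate of a preimage of `y`. These values assemble into
a two-sided inverse of `f` whose level-`i` coordinate again depends only on level `i + 1`. Maps
between subspaces of a product of discrete spaces with this property are continuous.
-/

open Function

lemma continuous_of_factorsThrough_discrete {X Y W : Type*} [TopologicalSpace X]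
    [TopologicalSpace Y] [TopologicalSpace W] [DiscreteTopology W] {p : X → W}
    (hp : Continuous p) {h : X → Y} (hh : FactorsThrough h p) : Continuous h := by
  refine continuous_def.2 fun s _ => ?_
  have hsat : h ⁻¹' s = p ⁻¹' (p '' (h ⁻¹' s)) := by
    ext x
    refine ⟨fun hx => ⟨x, hx, rfl⟩, ?_⟩
    rintro ⟨x', hx', hpx⟩
    exact Set.mem_preimage.2 (hh hpx ▸ hx')
  rw [hsat]
  exact (isOpen_discrete _).preimage hp

lemma continuous_of_apply_eq_of_apply_succ_eq {V : ℕ → Type*} [∀ i, TopologicalSpace (V i)]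
    [∀ i, DiscreteTopology (V i)] {s t : Set (∀ i, V i)} {F : s → t}
    (hF : ∀ (x x' : s) (i : ℕ), (x : ∀ i, V i) (i + 1) = (x' : ∀ i, V i) (i + 1) →
      (F x : ∀ i, V i) i = (F x' : ∀ i, V i) i) :
    Continuous F :=
  continuous_induced_rng.2 <| continuous_pi fun i =>
    continuous_of_factorsThrough_discrete ((continuous_apply (i + 1)).comp continuous_subtype_val)
      fun _ _ h => hF _ _ i h

namespace GraphCovering

variable {V : ℕ → Type*} (G : GraphCovering V)

lemma apply_eq_of_common_source {y y' : ∀ i, V i} (hy : y ∈ G.limitSet)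
    (hy' : y' ∈ G.limitSet) {i : ℕ} {v : V (i + 1)} (h : (v, y (i + 1)) ∈ G.E (i + 1))
    (h' : (v, y' (i + 1)) ∈ G.E (i + 1)) : y i = y' i := by
  rw [hy i, hy' i]
  exact (G.cover i).2.2 _ _ _ h h'

lemma apply_eq_of_common_target (hbi : ∀ i, IsBidirectional (G.E (i + 1)) (G.φ i))
    {x x' : ∀ i, V i} (hx : x ∈ G.limitSet) (hx' : x' ∈ G.limitSet) {i : ℕ} {w : V (i + 1)}
    (h : (x (i + 1), w) ∈ G.E (i + 1)) (h' : (x' (i + 1), w) ∈ G.E (i + 1)) : x i = x' i := by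
  rw [hx i, hx' i]
  exact (hbi i).2 _ _ _ h h'

noncomputable def inNeighbor (i : ℕ) (v : V i) : V i :=
  (G.surj i v).1.choose

lemma inNeighbor_mem_E (i : ℕ) (v : V i) : (G.inNeighbor i v, v) ∈ G.E i :=
  (G.surj i v).1.choose_spec

noncomputable def limitPreimage (y : ∀ i, V i) : ∀ i, V i :=
  fun i => G.φ i (G.inNeighbor (i + 1) (y (i + 1)))

lemma limitPreimage_mem_E {y : ∀ i, V i} (hy : y ∈ G.limitSet) (i : ℕ) :
    (G.limitPreimage y i, y i) ∈ G.E i := by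
  rw [hy i]
  exact (G.cover i).1 _ _ (G.inNeighbor_mem_E _ _)

lemma limitPreimage_mem_limitSet (hbi : ∀ i, IsBidirectional (G.E (i + 1)) (G.φ i))
    {y : ∀ i, V i} (hy : y ∈ G.limitSet) : G.limitPreimage y ∈ G.limitSet :=
  fun i => (hbi i).2 _ _ _ (G.inNeighbor_mem_E _ _) (G.limitPreimage_mem_E hy (i + 1))

end GraphCovering

theorem limit_map_homeomorph_of_bidirectional_general {V : ℕ → Type*}
    [∀ i, TopologicalSpace (V i)] [∀ i, DiscreteTopology (V i)]
    (G : GraphCovering V)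
    (hbi : ∀ i, IsBidirectional (G.E (i + 1)) (G.φ i))
    (f : G.limitSet → G.limitSet)
    (hf : ∀ x y : G.limitSet, f x = y ↔ ∀ i, ((x : ∀ i, V i) i, (y : ∀ i, V i) i) ∈ G.E i) :
    IsHomeomorph f := by
  have hedge (x : G.limitSet) (i : ℕ) : ((x : ∀ i, V i) i, (f x : ∀ i, V i) i) ∈ G.E i :=
    (hf x (f x)).1 rfl i
  let g : G.limitSet → G.limitSet :=
    fun y => ⟨G.limitPreimage y, G.limitPreimage_mem_limitSet hbi y.2⟩
  refine isHomeomorph_iff_exists_inverse.2 ⟨?_, g, fun x => ?_, fun y => ?_, ?_⟩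
  · exact continuous_of_apply_eq_of_apply_succ_eq fun x x' i h =>
      G.apply_eq_of_common_source (f x).2 (f x').2 (hedge x (i + 1)) (h ▸ hedge x' (i + 1))
  · ext i
    exact G.apply_eq_of_common_target hbi (g (f x)).2 x.2
      (G.limitPreimage_mem_E (f x).2 (i + 1)) (hedge x (i + 1))
  · exact (hf (g y) y).2 (G.limitPreimage_mem_E y.2)
  · exact continuous_of_apply_eq_of_apply_succ_eq fun y y' i h =>
      congrArg (fun v => G.φ i (G.inNeighbor (i + 1) v)) h

/-- If all the covers of a graph covering are bidirectional, then the induced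
map on the inverse limit is a homeomorphism. -/
theorem limit_map_homeomorph_of_bidirectional {V : ℕ → Type*} [∀ i, Fintype (V i)]
    [∀ i, TopologicalSpace (V i)] [∀ i, DiscreteTopology (V i)]
    (G : GraphCovering V)
    (hbi : ∀ i, IsBidirectional (G.E (i + 1)) (G.φ i))
    (f : G.limitSet → G.limitSet)
    (hf : ∀ x y : G.limitSet, f x = y ↔ ∀ i, ((x : ∀ i, V i) i, (y : ∀ i, V i) i) ∈ G.E i) :
    IsHomeomorph f :=
  limit_map_homeomorph_of_bidirectional_general G hbi f hf
end

section
/- Let 𝒢 be a graph covering with inverse limit system (V_𝒢, f). If for all n ≥ 0 there exists m > n such that every circuit c of G_m satisfies V(φ_{m,n}(c)) = V(G_n) (the image of the vertex set of c under φ_{m,n} is all of V(G_n)), then (V_𝒢, f) is minimal. -/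
/-- The composed covering map `φ_{m,n} : V m → V n` for `n ≤ m`. -/
def compMap {V : ℕ → Type*} (φ : ∀ i, V (i + 1) → V i) :
    ∀ {n m : ℕ}, n ≤ m → V m → V n :=
  fun {n} {m} h =>
    Nat.leRecOn (C := fun k => V k → V n) h
      (fun {k} ih x => ih (φ k x)) id

/-- A circuit of period `l` in the graph with edge set `E`: a cycle
`(c 0, …, c l)` with `c l = c 0` and `c 0, …, c (l-1)` mutually distinct. -/
def IsCircuit {V : Type*} (E : Set (V × V)) (l : ℕ) (c : ℕ → V) : Prop :=
  1 ≤ l ∧ c l = c 0 ∧ (∀ i < l, (c i, c (i + 1)) ∈ E) ∧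
    ∀ i < l, ∀ j < l, c i = c j → i = j

/-!
The forward orbit of `x`, read at level `m`, is an infinite walk in the finite graph `G m`.
The segment between the closest pair of equal vertices on it is a circuit, which by hypothesis
projects onto all of `V n`; so the orbit meets every cylinder `{y | y n = v}`. Since agreement
at level `n` forces agreement at all lower levels, these cylinders form a basis of the topology
of the inverse limit.
-/

theorem compMap_self {V : ℕ → Type*} (φ : ∀ i, V (i + 1) → V i) {n : ℕ} (h : n ≤ n)
    (x : V n) : compMap φ h x = x := by
  unfold compMap
  rw [Nat.leRecOn_self]
  rfl

theorem compMap_succ {V : ℕ → Type*} (φ : ∀ i, V (i + 1) → V i) {n m : ℕ} (h : n ≤ m)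
    (h' : n ≤ m + 1) (x : V (m + 1)) : compMap φ h' x = compMap φ h (φ m x) := by
  unfold compMap
  rw [Nat.leRecOn_succ h]

theorem exists_isCircuit_of_walk {W : Type*} [Finite W] {E : Set (W × W)} {p : ℕ → W}
    (hp : ∀ k, (p k, p (k + 1)) ∈ E) : ∃ l a, IsCircuit E l fun i => p (a + i) := by
  classical
  have hrep : ∃ l, 1 ≤ l ∧ ∃ a, p (a + l) = p a := by
    obtain ⟨a, b, hab, heq⟩ := Finite.exists_ne_map_eq_of_infinite p
    rcases lt_or_gt_of_ne hab with h | h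
    · exact ⟨b - a, by omega, a, by rw [Nat.add_sub_cancel' h.le, heq]⟩
    · exact ⟨a - b, by omega, b, by rw [Nat.add_sub_cancel' h.le, heq]⟩
  obtain ⟨hl, a, ha⟩ := Nat.find_spec hrep
  refine ⟨Nat.find hrep, a, hl, by simpa using ha,
    fun i _ => by simpa [← add_assoc] using hp (a + i), fun i hi j hj hij => ?_⟩
  wlog hlt : i < j generalizing i j
  · rcases eq_or_lt_of_not_gt hlt with h | h
    · exact h.symm
    · exact (this j hj i hi hij.symm h).symm
  -- a repetition inside the segment would be closer than the minimal one
  exact absurd ⟨by omega, a + i, by rw [add_assoc, Nat.add_sub_cancel' hlt.le]; exact hij.symm⟩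
    (Nat.find_min hrep (show j - i < Nat.find hrep by omega))

namespace GraphCovering

variable {V : ℕ → Type*} (G : GraphCovering V)

theorem compMap_apply_of_mem_limitSet {y : ∀ i, V i} (hy : y ∈ G.limitSet) {n m : ℕ}
    (h : n ≤ m) : compMap G.φ h (y m) = y n := by
  induction m, h using Nat.le_induction with
  | base => exact compMap_self G.φ le_rfl _
  | succ m h ih => rw [compMap_succ G.φ h, ← hy m, ih]

theorem apply_eq_of_apply_eq_of_le {x y : ∀ i, V i} (hx : x ∈ G.limitSet)
    (hy : y ∈ G.limitSet) {i n : ℕ} (hin : i ≤ n) (h : x n = y n) : x i = y i := by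
  rw [← G.compMap_apply_of_mem_limitSet hx hin, h, G.compMap_apply_of_mem_limitSet hy hin]

theorem dense_of_forall_exists_apply_eq [∀ i, TopologicalSpace (V i)]
    [∀ i, DiscreteTopology (V i)] {S : Set G.limitSet}
    (hS : ∀ (z : G.limitSet) (n : ℕ), ∃ s ∈ S, (s : ∀ i, V i) n = (z : ∀ i, V i) n) :
    Dense S := by
  refine dense_iff_inter_open.mpr fun U hU ⟨z, hzU⟩ => ?_
  obtain ⟨O, hO, rfl⟩ := isOpen_induced_iff.mp hU
  obtain ⟨I, u, hu, hIO⟩ := isOpen_pi_iff.mp hO _ hzU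
  obtain ⟨s, hsS, hs⟩ := hS z (I.sup id)
  refine ⟨s, hIO fun i hi => ?_, hsS⟩
  rw [G.apply_eq_of_apply_eq_of_le s.2 z.2 (show i ≤ I.sup id from Finset.le_sup (f := id) hi) hs]
  exact (hu i hi).2

theorem exists_iterate_apply_eq [∀ i, Finite (V i)] {f : G.limitSet → G.limitSet}
    (hf : ∀ (x : G.limitSet) (i : ℕ), ((x : ∀ i, V i) i, (f x : ∀ i, V i) i) ∈ G.E i)
    {n m : ℕ} (h : n ≤ m)
    (hcirc : ∀ (l : ℕ) (c : ℕ → V m), IsCircuit (G.E m) l c →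
      ∀ v : V n, ∃ i ≤ l, compMap G.φ h (c i) = v)
    (x : G.limitSet) (v : V n) : ∃ k, (f^[k] x : ∀ i, V i) n = v := by
  obtain ⟨l, a, hc⟩ := exists_isCircuit_of_walk (E := G.E m)
    (p := fun k => (f^[k] x : ∀ i, V i) m) fun k => by
      simpa only [Function.iterate_succ_apply'] using hf (f^[k] x) m
  obtain ⟨i, -, hi⟩ := hcirc l _ hc v
  exact ⟨a + i, by rw [← hi, G.compMap_apply_of_mem_limitSet (f^[a + i] x).2]⟩

end GraphCovering

/-- Minimality criterion (sufficiency): if for all `n` there is `m > n` such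
that every circuit of `G m` projects onto all vertices of `G n`, then the
inverse limit system is minimal (every forward orbit is dense). -/
theorem limit_minimal_of_circuit_condition {V : ℕ → Type*} [∀ i, Fintype (V i)]
    [∀ i, TopologicalSpace (V i)] [∀ i, DiscreteTopology (V i)]
    (G : GraphCovering V)
    (f : G.limitSet → G.limitSet)
    (hf : ∀ x y : G.limitSet, f x = y ↔
      ∀ i, ((x : ∀ i, V i) i, (y : ∀ i, V i) i) ∈ G.E i)
    (hcirc : ∀ n : ℕ, ∃ m : ℕ, ∃ h : n < m,
      ∀ (l : ℕ) (c : ℕ → V m), IsCircuit (G.E m) l c →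
        ∀ v : V n, ∃ i ≤ l, compMap G.φ h.le (c i) = v) :
    ∀ x : G.limitSet, Dense (Set.range fun k : ℕ => f^[k] x) := by
  intro x
  have hstep : ∀ (y : G.limitSet) (i : ℕ),
      ((y : ∀ i, V i) i, (f y : ∀ i, V i) i) ∈ G.E i := fun y => (hf y (f y)).mp rfl
  refine G.dense_of_forall_exists_apply_eq fun z n => ?_
  obtain ⟨m, hnm, hm⟩ := hcirc n
  obtain ⟨k, hk⟩ := G.exists_iterate_apply_eq hstep hnm.le hm x ((z : ∀ i, V i) n)
  exact ⟨f^[k] x, ⟨k, rfl⟩, hk⟩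
end
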